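/- Over any ring, every ℵ₁-projective module (a module all of whose countably generated submodules are projective) is flat. -/

import Mathlib

open MulOpposite

section CTensor
variable (R : Type) [Ring R]
variable (N : Type) [AddCommGroup N] [Module Rᵐᵒᵖ N]
variable (M : Type) [AddCommGroup M] [Module R M]

def tensorRels : AddSubgroup (FreeAbelianGroup (N × M)) :=
  AddSubgroup.closure
    {x | (∃ n n' m, x = FreeAbelianGroup.of (n + n', m) - FreeAbelianGroup.of (n, m) -
            FreeAbelianGroup.of (n', m)) ∨
         (∃ n m m', x = FreeAbelianGroup.of (n, m + m') - FreeAbelianGroup.of (n, m) -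
            FreeAbelianGroup.of (n, m')) ∨
         (∃ (r : R) (n : N) (m : M), x = FreeAbelianGroup.of (op r • n, m) -
            FreeAbelianGroup.of (n, r • m))}

abbrev CTensor : Type := FreeAbelianGroup (N × M) ⧸ tensorRels R N M

def ctmul (n : N) (m : M) : CTensor R N M :=
  QuotientAddGroup.mk (FreeAbelianGroup.of (n, m))

variable {R N M}

theorem ctmul_add_left (n n' : N) (m : M) :
    ctmul R N M (n + n') m = ctmul R N M n m + ctmul R N M n' m := by
  rw [eq_comm, ← sub_eq_zero]
  show QuotientAddGroup.mk _ + QuotientAddGroup.mk _ - QuotientAddGroup.mk _ = (0 : CTensor R N M)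
  rw [← QuotientAddGroup.mk_add, ← QuotientAddGroup.mk_sub, QuotientAddGroup.eq_zero_iff]
  have h : FreeAbelianGroup.of (n, m) + FreeAbelianGroup.of (n', m) -
      FreeAbelianGroup.of (n + n', m) =
      -(FreeAbelianGroup.of (n + n', m) - FreeAbelianGroup.of (n, m) -
        FreeAbelianGroup.of (n', m)) := by abel
  rw [h]
  exact neg_mem (AddSubgroup.subset_closure (Or.inl ⟨n, n', m, rfl⟩))

theorem ctmul_add_right (n : N) (m m' : M) :
    ctmul R N M n (m + m') = ctmul R N M n m + ctmul R N M n m' := by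
  rw [eq_comm, ← sub_eq_zero]
  show QuotientAddGroup.mk _ + QuotientAddGroup.mk _ - QuotientAddGroup.mk _ = (0 : CTensor R N M)
  rw [← QuotientAddGroup.mk_add, ← QuotientAddGroup.mk_sub, QuotientAddGroup.eq_zero_iff]
  have h : FreeAbelianGroup.of (n, m) + FreeAbelianGroup.of (n, m') -
      FreeAbelianGroup.of (n, m + m') =
      -(FreeAbelianGroup.of (n, m + m') - FreeAbelianGroup.of (n, m) -
        FreeAbelianGroup.of (n, m')) := by abel
  rw [h]
  exact neg_mem (AddSubgroup.subset_closure (Or.inr (Or.inl ⟨n, m, m', rfl⟩)))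

theorem ctmul_smul (r : R) (n : N) (m : M) :
    ctmul R N M (op r • n) m = ctmul R N M n (r • m) := by
  rw [← sub_eq_zero]
  show QuotientAddGroup.mk _ - QuotientAddGroup.mk _ = (0 : CTensor R N M)
  rw [← QuotientAddGroup.mk_sub, QuotientAddGroup.eq_zero_iff]
  apply AddSubgroup.subset_closure
  right; right
  exact ⟨r, n, m, rfl⟩

variable (R N M)

/-- Universal property: lift a balanced biadditive map to the balanced tensor product. -/
def ctlift {A : Type} [AddCommGroup A] (f : N → M → A)
    (h1 : ∀ n n' m, f (n + n') m = f n m + f n' m)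
    (h2 : ∀ n m m', f n (m + m') = f n m + f n m')
    (h3 : ∀ (r : R) n m, f (op r • n) m = f n (r • m)) :
    CTensor R N M →+ A :=
  QuotientAddGroup.lift _ (FreeAbelianGroup.lift fun p => f p.1 p.2) (by
    rw [tensorRels, AddSubgroup.closure_le]
    rintro x (⟨n, n', m, rfl⟩ | ⟨n, m, m', rfl⟩ | ⟨r, n, m, rfl⟩) <;>
      simp [AddMonoidHom.mem_ker, FreeAbelianGroup.lift_apply_of, h1, h2, h3])

@[simp] theorem ctlift_ctmul {A : Type} [AddCommGroup A] (f : N → M → A) (h1) (h2) (h3)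
    (n : N) (m : M) : ctlift R N M f h1 h2 h3 (ctmul R N M n m) = f n m := by
  simp [ctlift, ctmul, QuotientAddGroup.lift_mk, FreeAbelianGroup.lift_apply_of]

end CTensor

section Maps
variable (R : Type) [Ring R]

/-- Functoriality of the balanced tensor product in the right-module variable. -/
def ctmapLeft {N N' : Type} [AddCommGroup N] [Module Rᵐᵒᵖ N] [AddCommGroup N']
    [Module Rᵐᵒᵖ N'] (f : N →ₗ[Rᵐᵒᵖ] N') (M : Type) [AddCommGroup M] [Module R M] :
    CTensor R N M →+ CTensor R N' M :=
  ctlift R N M (fun n m => ctmul R N' M (f n) m)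
    (fun n n' m => by (try dsimp only); rw [map_add, ctmul_add_left])
    (fun n m m' => by (try dsimp only); rw [ctmul_add_right])
    (fun r n m => by (try dsimp only); rw [map_smul, ctmul_smul])

/-- Functoriality of the balanced tensor product in the left-module variable. -/
def ctmapRight (N : Type) [AddCommGroup N] [Module Rᵐᵒᵖ N] {M M' : Type} [AddCommGroup M]
    [Module R M] [AddCommGroup M'] [Module R M'] (f : M →ₗ[R] M') :
    CTensor R N M →+ CTensor R N M' :=
  ctlift R N M (fun n m => ctmul R N M' n (f m))
    (fun n n' m => by (try dsimp only); rw [ctmul_add_left])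
    (fun n m m' => by (try dsimp only); rw [map_add, ctmul_add_right])
    (fun r n m => by (try dsimp only); rw [ctmul_smul, map_smul])

/-- The canonical map `(∏ i, N i) ⊗ M → ∏ i, (N i ⊗ M)`. -/
def ctCanonical {ι : Type} (N : ι → Type) [∀ i, AddCommGroup (N i)]
    [∀ i, Module Rᵐᵒᵖ (N i)] (M : Type) [AddCommGroup M] [Module R M] :
    CTensor R (∀ i, N i) M →+ ∀ i, CTensor R (N i) M :=
  ctlift R (∀ i, N i) M (fun n m i => ctmul R (N i) M (n i) m)
    (fun n n' m => by funext i; exact ctmul_add_left _ _ _)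
    (fun n m m' => by funext i; exact ctmul_add_right _ _ _)
    (fun r n m => by funext i; exact ctmul_smul _ _ _)

end Maps

/-- A submodule is countably generated if it is the span of a countable set. -/
def CountablyGenerated (R : Type) {M : Type} [Ring R] [AddCommGroup M] [Module R M]
    (A : Submodule R M) : Prop :=
  ∃ S : Set M, S.Countable ∧ Submodule.span R S = A

/-- A left `R`-module `M` is flat: for every injective map `N → N'` of right `R`-modules, the
induced map `N ⊗_R M → N' ⊗_R M` is injective. -/
def IsCFlat (R : Type) [Ring R] (M : Type) [AddCommGroup M] [Module R M] : Prop :=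
  ∀ (N N' : ModuleCat Rᵐᵒᵖ) (f : ↥N →ₗ[Rᵐᵒᵖ] ↥N'),
    Function.Injective f → Function.Injective (ctmapLeft R f M)

/-!
Tensoring with a free module `R^(X)` preserves injections, since `N ⊗ R^(X) ≅ N^(X)`
naturally in `N`; hence so does tensoring with a projective module, a retract of a free one.
Flatness has finite character: an element of `N ⊗ M` and the finitely many defining relations
witnessing that it vanishes involve only finitely many elements of `M`, so injectivity of
`N ⊗ M → N' ⊗ M` can be tested on finitely generated submodules of `M`. These are countably
generated, hence projective when `M` is `ℵ₁`-projective.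
-/

theorem FreeAbelianGroup.map_injective {α β : Type*} {f : α → β} (hf : Function.Injective f) :
    Function.Injective (FreeAbelianGroup.map f) := by
  have h : toFinsupp.comp (map f) = (Finsupp.mapDomain.addMonoidHom f).comp toFinsupp :=
    lift_ext _ _ fun x => by simp
  refine Function.Injective.of_comp (f := toFinsupp) ?_
  rw [← AddMonoidHom.coe_comp, h, AddMonoidHom.coe_comp]
  exact (Finsupp.mapDomain_injective hf).comp (equivFinsupp α).injective

section Tensor

variable {R : Type} [Ring R]
variable {N N' : Type} [AddCommGroup N] [Module Rᵐᵒᵖ N] [AddCommGroup N'] [Module Rᵐᵒᵖ N']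
variable {M M' M'' : Type} [AddCommGroup M] [Module R M] [AddCommGroup M'] [Module R M']
  [AddCommGroup M''] [Module R M'']

theorem CTensor.induction_on {P : CTensor R N M → Prop} (x : CTensor R N M)
    (zero : P 0) (tmul : ∀ n m, P (ctmul R N M n m))
    (neg : ∀ x, P x → P (-x)) (add : ∀ x y, P x → P y → P (x + y)) : P x := by
  obtain ⟨y, rfl⟩ := QuotientAddGroup.mk'_surjective (tensorRels R N M) x
  induction y using FreeAbelianGroup.induction_on with
  | zero => exact zero
  | of p => exact tmul p.1 p.2
  | neg p hp => exact neg _ hp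
  | add y z hy hz => exact add _ _ hy hz

@[simp] theorem ctmul_zero_left (m : M) : ctmul R N M 0 m = 0 := by
  simpa using ctmul_add_left (R := R) (0 : N) 0 m

@[simp] theorem ctmul_zero_right (n : N) : ctmul R N M n 0 = 0 := by
  simpa using ctmul_add_right (R := R) n (0 : M) 0

theorem CTensor.addMonoidHom_ext {A : Type} [AddCommGroup A] {φ ψ : CTensor R N M →+ A}
    (h : ∀ n m, φ (ctmul R N M n m) = ψ (ctmul R N M n m)) : φ = ψ :=
  QuotientAddGroup.addMonoidHom_ext _ (FreeAbelianGroup.lift_ext _ _ fun p => h p.1 p.2)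

@[simp] theorem ctmapLeft_ctmul (f : N →ₗ[Rᵐᵒᵖ] N') (n : N) (m : M) :
    ctmapLeft R f M (ctmul R N M n m) = ctmul R N' M (f n) m :=
  ctlift_ctmul _ _ _ _ _ _ _ _ _

@[simp] theorem ctmapRight_ctmul (g : M →ₗ[R] M') (n : N) (m : M) :
    ctmapRight R N g (ctmul R N M n m) = ctmul R N M' n (g m) :=
  ctlift_ctmul _ _ _ _ _ _ _ _ _

theorem ctmapRight_comp (g : M' →ₗ[R] M'') (g' : M →ₗ[R] M') (x : CTensor R N M) :
    ctmapRight R N g (ctmapRight R N g' x) = ctmapRight R N (g ∘ₗ g') x :=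
  DFunLike.congr_fun (CTensor.addMonoidHom_ext (φ := (ctmapRight R N g).comp (ctmapRight R N g'))
    fun n m => by simp) x

theorem ctmapRight_id (x : CTensor R N M) : ctmapRight R N LinearMap.id x = x :=
  DFunLike.congr_fun (CTensor.addMonoidHom_ext (ψ := AddMonoidHom.id _) fun n m => by simp) x

theorem ctmapLeft_ctmapRight_comm (f : N →ₗ[Rᵐᵒᵖ] N') (g : M →ₗ[R] M') (x : CTensor R N M) :
    ctmapLeft R f M' (ctmapRight R N g x) = ctmapRight R N' g (ctmapLeft R f M x) :=
  DFunLike.congr_fun (CTensor.addMonoidHom_ext (φ := (ctmapLeft R f M').comp (ctmapRight R N g))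
    (ψ := (ctmapRight R N' g).comp (ctmapLeft R f M)) fun n m => by simp) x

theorem ctmapRight_injective_of_comp_eq_id (i : M →ₗ[R] M') (r : M' →ₗ[R] M)
    (hri : r ∘ₗ i = LinearMap.id) : Function.Injective (ctmapRight R N i) :=
  Function.LeftInverse.injective (g := ctmapRight R N r) fun z => by
    rw [ctmapRight_comp, hri, ctmapRight_id]

end Tensor

section Free

variable {R : Type} [Ring R]
variable {N N' : Type} [AddCommGroup N] [Module Rᵐᵒᵖ N] [AddCommGroup N'] [Module Rᵐᵒᵖ N']

variable (R N) in
noncomputable def ctToFinsupp (X : Type) : CTensor R N (X →₀ R) →+ (X →₀ N) :=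
  ctlift R N (X →₀ R) (fun n p => p.sum fun x r => Finsupp.single x (op r • n))
    (fun n n' p => by
      simp only [smul_add, Finsupp.single_add]
      exact Finsupp.sum_add)
    (fun n p p' => Finsupp.sum_add_index' (fun x => by simp)
      (fun x r r' => by rw [op_add, add_smul, Finsupp.single_add]))
    (fun r n p => by
      rw [Finsupp.sum_smul_index (fun x => by simp)]
      simp only [smul_smul, ← op_mul])

variable (R N) in
noncomputable def finsuppToCt (X : Type) : (X →₀ N) →+ CTensor R N (X →₀ R) :=
  Finsupp.liftAddHom fun x =>
    AddMonoidHom.mk' (fun n => ctmul R N (X →₀ R) n (Finsupp.single x 1))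
      (fun n n' => ctmul_add_left n n' _)

@[simp] theorem ctToFinsupp_ctmul_single (X : Type) (n : N) (x : X) (r : R) :
    ctToFinsupp R N X (ctmul R N (X →₀ R) n (Finsupp.single x r)) =
      Finsupp.single x (op r • n) := by
  simp [ctToFinsupp]

theorem finsuppToCt_ctToFinsupp (X : Type) :
    Function.LeftInverse (finsuppToCt R N X) (ctToFinsupp R N X) := by
  intro z
  induction z using CTensor.induction_on with
  | zero => simp
  | neg x hx => simp [hx]
  | add x y hx hy => simp [hx, hy]
  | tmul n p =>
    induction p using Finsupp.induction_linear with
    | zero => simp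
    | add p q hp hq => simp only [ctmul_add_right, map_add, hp, hq]
    | single x r => simp [finsuppToCt, ctmul_smul]

theorem ctToFinsupp_ctmapLeft (X : Type) (f : N →ₗ[Rᵐᵒᵖ] N') (z : CTensor R N (X →₀ R)) :
    ctToFinsupp R N' X (ctmapLeft R f (X →₀ R) z)
      = Finsupp.mapRange.addMonoidHom f.toAddMonoidHom (ctToFinsupp R N X z) := by
  induction z using CTensor.induction_on with
  | zero => simp
  | neg x hx => simp only [map_neg, hx]
  | add x y hx hy => simp only [map_add, hx, hy]
  | tmul n p =>
    induction p using Finsupp.induction_linear with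
    | zero => simp
    | add p q hp hq => simp only [ctmul_add_right, map_add, hp, hq]
    | single x r => simp

theorem isCFlat_finsupp (X : Type) : IsCFlat R (X →₀ R) := by
  intro N N' f hf
  refine Function.Injective.of_comp (f := ctToFinsupp R N' X) ?_
  have h : ctToFinsupp R N' X ∘ ctmapLeft R f (X →₀ R) =
      Finsupp.mapRange.addMonoidHom f.toAddMonoidHom ∘ ctToFinsupp R N X :=
    funext (ctToFinsupp_ctmapLeft X f)
  rw [h]
  exact (Finsupp.mapRange_injective f (map_zero f) hf).comp (finsuppToCt_ctToFinsupp X).injective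

end Free

section Projective

variable {R : Type} [Ring R]

theorem IsCFlat.of_retract {P Q : Type} [AddCommGroup P] [Module R P] [AddCommGroup Q]
    [Module R Q] (i : P →ₗ[R] Q) (r : Q →ₗ[R] P) (hri : r ∘ₗ i = LinearMap.id)
    (hQ : IsCFlat R Q) : IsCFlat R P := by
  intro N N' f hf
  refine Function.Injective.of_comp (f := ctmapRight R N' i) ?_
  have h : ctmapRight R N' i ∘ ctmapLeft R f P = ctmapLeft R f Q ∘ ctmapRight R N i :=
    funext fun z => (ctmapLeft_ctmapRight_comm f i z).symm
  rw [h]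
  exact (hQ N N' f hf).comp (ctmapRight_injective_of_comp_eq_id i r hri)

theorem isCFlat_of_projective (P : Type) [AddCommGroup P] [Module R P] [Module.Projective R P] :
    IsCFlat R P := by
  obtain ⟨s, hs⟩ := Module.projective_def'.mp ‹Module.Projective R P›
  exact (isCFlat_finsupp P).of_retract s _ hs

end Projective

section FiniteCharacter

variable {R : Type} [Ring R] {N : Type} [AddCommGroup N] [Module Rᵐᵒᵖ N]
variable {M M' : Type} [AddCommGroup M] [Module R M] [AddCommGroup M'] [Module R M']

theorem ctmapRight_mk (g : M →ₗ[R] M') (w : FreeAbelianGroup (N × M)) :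
    ctmapRight R N g (QuotientAddGroup.mk w) =
      QuotientAddGroup.mk (FreeAbelianGroup.map (Prod.map id g) w) :=
  DFunLike.congr_fun (FreeAbelianGroup.lift_ext ((ctmapRight R N g).comp (QuotientAddGroup.mk' _))
    ((QuotientAddGroup.mk' _).comp (FreeAbelianGroup.map (Prod.map id g)))
    fun p => ctmapRight_ctmul g p.1 p.2) w

theorem exists_finset_forall_mem_map_tensorRels {u : FreeAbelianGroup (N × M)}
    (hu : u ∈ tensorRels R N M) :
    ∃ t : Finset M, ∀ B : Submodule R M, ↑t ⊆ (B : Set M) →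
      u ∈ (tensorRels R N B).map (FreeAbelianGroup.map (Prod.map id B.subtype)) := by
  classical
  induction hu using AddSubgroup.closure_induction with
  | mem x hx =>
    rcases hx with ⟨n, n', m, rfl⟩ | ⟨n, m, m', rfl⟩ | ⟨r, n, m, rfl⟩
    · refine ⟨{m}, fun B hB => ?_⟩
      have hm : m ∈ B := hB (by simp)
      exact ⟨_, AddSubgroup.subset_closure (Or.inl ⟨n, n', ⟨m, hm⟩, rfl⟩), by simp⟩
    · refine ⟨{m, m'}, fun B hB => ?_⟩
      have hm : m ∈ B := hB (by simp)
      have hm' : m' ∈ B := hB (by simp)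
      exact ⟨_, AddSubgroup.subset_closure (Or.inr (Or.inl ⟨n, ⟨m, hm⟩, ⟨m', hm'⟩, rfl⟩)),
        by simp⟩
    · refine ⟨{m}, fun B hB => ?_⟩
      have hm : m ∈ B := hB (by simp)
      exact ⟨_, AddSubgroup.subset_closure (Or.inr (Or.inr ⟨r, n, ⟨m, hm⟩, rfl⟩)), by simp⟩
  | zero => exact ⟨∅, fun B _ => zero_mem _⟩
  | add x y _ _ hx hy =>
    obtain ⟨t₁, h₁⟩ := hx
    obtain ⟨t₂, h₂⟩ := hy
    refine ⟨t₁ ∪ t₂, fun B hB => ?_⟩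
    rw [Finset.coe_union, Set.union_subset_iff] at hB
    exact add_mem (h₁ B hB.1) (h₂ B hB.2)
  | neg x _ hx =>
    obtain ⟨t, ht⟩ := hx
    exact ⟨t, fun B hB => neg_mem (ht B hB)⟩

theorem exists_fg_ctmapRight_inclusion_eq_zero {A : Submodule R M} (hA : A.FG)
    (z : CTensor R N A) (hz : ctmapRight R N A.subtype z = 0) :
    ∃ (B : Submodule R M) (hAB : A ≤ B), B.FG ∧ ctmapRight R N (Submodule.inclusion hAB) z = 0 := by
  obtain ⟨w, rfl⟩ := QuotientAddGroup.mk_surjective z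
  rw [ctmapRight_mk, QuotientAddGroup.eq_zero_iff] at hz
  obtain ⟨t, ht⟩ := exists_finset_forall_mem_map_tensorRels hz
  let B := A ⊔ Submodule.span R t
  obtain ⟨u, hu, hmap⟩ := ht B (Submodule.subset_span.trans (le_sup_right : _ ≤ B))
  refine ⟨B, le_sup_left, hA.sup (Submodule.fg_span t.finite_toSet), ?_⟩
  suffices FreeAbelianGroup.map (Prod.map id (Submodule.inclusion (le_sup_left : A ≤ B))) w = u by
    rw [ctmapRight_mk, QuotientAddGroup.eq_zero_iff, this]
    exact hu
  apply FreeAbelianGroup.map_injective (Function.injective_id.prodMap B.injective_subtype)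
  rw [hmap, ← FreeAbelianGroup.map_comp_apply]
  rfl

theorem exists_fg_ctmapRight_subtype_eq (x : CTensor R N M) :
    ∃ A : Submodule R M, A.FG ∧ ∃ x₀ : CTensor R N A, ctmapRight R N A.subtype x₀ = x := by
  induction x using CTensor.induction_on with
  | zero => exact ⟨⊥, Submodule.fg_bot, 0, map_zero _⟩
  | tmul n m =>
    exact ⟨Submodule.span R {m}, Submodule.fg_span_singleton m,
      ctmul R N _ n ⟨m, Submodule.mem_span_singleton_self m⟩, by simp⟩
  | neg x hx =>
    obtain ⟨A, hA, x₀, hx₀⟩ := hx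
    exact ⟨A, hA, -x₀, by rw [map_neg, hx₀]⟩
  | add x y hx hy =>
    obtain ⟨A₁, hA₁, x₁, rfl⟩ := hx
    obtain ⟨A₂, hA₂, x₂, rfl⟩ := hy
    refine ⟨A₁ ⊔ A₂, hA₁.sup hA₂,
      ctmapRight R N (Submodule.inclusion le_sup_left) x₁ +
        ctmapRight R N (Submodule.inclusion le_sup_right) x₂, ?_⟩
    rw [map_add, ctmapRight_comp, ctmapRight_comp, Submodule.subtype_comp_inclusion,
      Submodule.subtype_comp_inclusion]

end FiniteCharacter

theorem IsCFlat.of_forall_fg {R M : Type} [Ring R] [AddCommGroup M] [Module R M]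
    (h : ∀ A : Submodule R M, A.FG → IsCFlat R A) : IsCFlat R M := by
  intro N N' f hf
  rw [injective_iff_map_eq_zero]
  intro x hx
  obtain ⟨A, hA, x₀, rfl⟩ := exists_fg_ctmapRight_subtype_eq x
  obtain ⟨B, hAB, hB, hB₀⟩ := exists_fg_ctmapRight_inclusion_eq_zero hA (ctmapLeft R f A x₀)
    (by rwa [← ctmapLeft_ctmapRight_comm])
  have hx₀ : ctmapRight R N (Submodule.inclusion hAB) x₀ = 0 :=
    h B hB N N' f hf (by rw [ctmapLeft_ctmapRight_comm, hB₀, map_zero])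
  rw [← Submodule.subtype_comp_inclusion A B hAB, ← ctmapRight_comp, hx₀, map_zero]

/-- Over any ring, every `ℵ₁`-projective module (every countably generated submodule is
projective) is flat. -/
theorem flat_of_aleph1Projective (R M : Type) [Ring R] [AddCommGroup M] [Module R M]
    (h : ∀ A : Submodule R M, CountablyGenerated R A → Module.Projective R ↥A) :
    IsCFlat R M :=
  IsCFlat.of_forall_fg fun A ⟨s, hs⟩ =>
    have := h A ⟨s, s.countable_toSet, hs⟩
    isCFlat_of_projective A
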